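/- arXiv:1106.3357 — 2 statements merged into one kernel-verified Lean document; each statement's English description precedes it below -/
import Mathlib

section
/- Let (C, d) be a chain complex over Z/2 with basis e_1,...,e_n and fix i < j with |e_i| = |e_j| - 1. Let u_1,...,u_r be the indices with ⟨d e_{u_k}, e_i⟩ = 1 and v_1,...,v_s the indices with ⟨d e_j, e_{v_k}⟩ = 1. Then the composition h = h_{i,v_1} ∘ ... ∘ h_{i,v_s} ∘ h_{u_1,j} ∘ ... ∘ h_{u_r,j} of handleslide maps commutes with d, i.e. h ∘ d = d ∘ h. -/
/-- The handleslide map `h_{k,l}` as a `ℤ/2`-linear endomorphism: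
`h (e k) = e k + e l`, `h (e i) = e i` for `i ≠ k`. -/
def handleslideL {n : ℕ} (k l : Fin n) :
    Module.End (ZMod 2) (Fin n → ZMod 2) where
  toFun x := fun i => if i = l then x l + x k else x i
  map_add' x y := by
    funext i
    by_cases h : i = l
    · simp [h]; ring
    · simp [h]
  map_smul' c x := by
    funext i
    by_cases h : i = l <;> simp [h, smul_eq_mul, mul_add]

namespace Stmt5Aux

variable {n : ℕ}

/-- Elementary operator: `x ↦ x k • e_l`. -/
def Eop (k l : Fin n) : Module.End (ZMod 2) (Fin n → ZMod 2) :=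
  (LinearMap.proj k).smulRight (Pi.single l 1)

lemma Eop_apply (k l : Fin n) (x : Fin n → ZMod 2) :
    Eop k l x = x k • Pi.single l 1 := rfl

lemma handleslide_eq (k l : Fin n) : handleslideL k l = 1 + Eop k l := by
  refine LinearMap.ext fun x => funext fun b => ?_
  simp only [handleslideL, LinearMap.coe_mk, AddHom.coe_mk, LinearMap.add_apply,
    Module.End.one_apply, Eop_apply, Pi.add_apply, Pi.smul_apply, smul_eq_mul,
    Pi.single_apply]
  by_cases hb : b = l
  · subst hb; simp
  · simp [hb]

lemma Eop_mul (k l k' l' : Fin n) (hne : l' ≠ k) : Eop k l * Eop k' l' = 0 := by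
  refine LinearMap.ext fun x => funext fun b => ?_
  simp [Eop_apply, Module.End.mul_apply, Pi.single_apply, Ne.symm hne]

lemma mul_sumE (k l : Fin n) (L : List (Fin n × Fin n)) (hL : ∀ q ∈ L, q.2 ≠ k) :
    Eop k l * (L.map fun q => Eop q.1 q.2).sum = 0 := by
  induction L with
  | nil => simp
  | cons q L ih =>
    simp only [List.map_cons, List.sum_cons, mul_add]
    rw [Eop_mul k l q.1 q.2 (hL q (by simp)), ih (fun r hr => hL r (by simp [hr]))]
    simp

lemma prod_eq (L : List (Fin n × Fin n)) (hL : ∀ p ∈ L, ∀ q ∈ L, q.2 ≠ p.1) :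
    (L.map fun p => handleslideL p.1 p.2).prod
      = 1 + (L.map fun p => Eop p.1 p.2).sum := by
  induction L with
  | nil => simp
  | cons p L ih =>
    simp only [List.map_cons, List.prod_cons, List.sum_cons]
    rw [ih (fun a ha b hb => hL a (by simp [ha]) b (by simp [hb])), handleslide_eq,
      add_mul, one_mul, mul_add, mul_one,
      mul_sumE p.1 p.2 L (fun q hq => hL p (by simp) q (by simp [hq]))]
    abel

lemma sumE_left_apply (i : Fin n) (V : List (Fin n)) (y : Fin n → ZMod 2) :
    ((V.map fun v => Eop i v).sum) y
      = y i • (V.map fun v => (Pi.single v 1 : Fin n → ZMod 2)).sum := by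
  induction V with
  | nil => simp
  | cons v V ih =>
    simp [List.map_cons, List.sum_cons, LinearMap.add_apply, ih, Eop_apply, smul_add]

lemma sumE_right_apply (j : Fin n) (U : List (Fin n)) (y : Fin n → ZMod 2) :
    ((U.map fun u => Eop u j).sum) y
      = (U.map y).sum • (Pi.single j 1 : Fin n → ZMod 2) := by
  induction U with
  | nil => simp
  | cons u U ih =>
    simp [List.map_cons, List.sum_cons, LinearMap.add_apply, ih, Eop_apply, add_smul]

lemma indicator_sum (V : List (Fin n)) (hV : V.Nodup) (b : Fin n) :
    (V.map fun v => ((Pi.single v (1 : ZMod 2) : Fin n → ZMod 2) b)).sum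
      = if b ∈ V then 1 else 0 := by
  induction V with
  | nil => simp
  | cons v V ih =>
    rcases List.nodup_cons.mp hV with ⟨hv, hVn⟩
    simp only [List.map_cons, List.sum_cons, List.mem_cons]
    rw [ih hVn]
    by_cases hb : b = v
    · subst hb; simp [Pi.single_apply, hv]
    · simp [Pi.single_apply, hb]

lemma list_single_sum_apply (V : List (Fin n)) (b : Fin n) :
    ((V.map fun v => (Pi.single v 1 : Fin n → ZMod 2)).sum) b
      = (V.map fun v => ((Pi.single v (1 : ZMod 2) : Fin n → ZMod 2) b)).sum := by
  induction V with
  | nil => simp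
  | cons v V ih => simp [List.map_cons, List.sum_cons, ih]

end Stmt5Aux

/-- Let `(C, d)` be a chain complex over `ℤ/2` with ordered basis
`e_1, ..., e_n`, triangular degree `-1` differential, and fix `i < j` with
`|e_i| = |e_j| - 1`.  Let `U = u_1, ..., u_r` enumerate the indices with
`⟨d e_u, e_i⟩ = 1` and `V = v_1, ..., v_s` the indices with
`⟨d e_j, e_v⟩ = 1`.  Then the composition
`h = h_{i,v_1} ∘ ⋯ ∘ h_{i,v_s} ∘ h_{u_1,j} ∘ ⋯ ∘ h_{u_r,j}`
commutes with `d`. -/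
theorem stmt_5 {n : ℕ} (deg : Fin n → ℤ)
    (d : (Fin n → ZMod 2) →ₗ[ZMod 2] (Fin n → ZMod 2))
    (hd2 : d ∘ₗ d = 0)
    (htri : ∀ a b : Fin n, (b : ℕ) ≤ (a : ℕ) → d (Pi.single a 1) b = 0)
    (hdeg : ∀ a b : Fin n, d (Pi.single a 1) b ≠ 0 → deg b = deg a - 1)
    (i j : Fin n) (hij : i < j) (hdegij : deg i = deg j - 1)
    (U V : List (Fin n)) (hU : U.Nodup) (hV : V.Nodup)
    (hUmem : ∀ u : Fin n, u ∈ U ↔ d (Pi.single u 1) i = 1)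
    (hVmem : ∀ v : Fin n, v ∈ V ↔ d (Pi.single j 1) v = 1)
    (h : Module.End (ZMod 2) (Fin n → ZMod 2))
    (hh : h = (V.map (fun v => handleslideL i v) ++
               U.map (fun u => handleslideL u j)).prod) :
    h ∘ₗ d = d ∘ₗ h := by
  classical
  have hzo : ∀ c : ZMod 2, c = 0 ∨ c = 1 := by decide
  have hdd : ∀ y, d (d y) = 0 := fun y => by
    simpa using LinearMap.congr_fun hd2 y
  have h0 : d (Pi.single j 1) i = 0 := htri j i (le_of_lt hij)
  have hiV : i ∉ V := by
    intro hm
    rw [(hVmem i).1 hm] at h0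
    exact one_ne_zero h0
  have hjU : j ∉ U := by
    intro hm
    rw [(hUmem j).1 hm] at h0
    exact one_ne_zero h0
  have hdegU : ∀ u ∈ U, deg u = deg j := by
    intro u hu
    have := hdeg u i (by rw [(hUmem u).1 hu]; exact one_ne_zero)
    omega
  have hdegV : ∀ v ∈ V, deg v = deg i := by
    intro v hv
    have := hdeg j v (by rw [(hVmem v).1 hv]; exact one_ne_zero)
    omega
  -- indicator descriptions of differential entries
  have hUind : ∀ a, d (Pi.single a 1) i = if a ∈ U then 1 else 0 := by
    intro a
    by_cases ha : a ∈ U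
    · simp [ha, (hUmem a).1 ha]
    · rcases hzo (d (Pi.single a 1) i) with hc | hc
      · simp [ha, hc]
      · exact absurd ((hUmem a).2 hc) ha
  have hVind : ∀ b, d (Pi.single j 1) b = if b ∈ V then 1 else 0 := by
    intro b
    by_cases hb : b ∈ V
    · simp [hb, (hVmem b).1 hb]
    · rcases hzo (d (Pi.single j 1) b) with hc | hc
      · simp [hb, hc]
      · exact absurd ((hVmem b).2 hc) hb
  -- the combined list of pairs
  set L : List (Fin n × Fin n) :=
    V.map (fun v => (i, v)) ++ U.map (fun u => (u, j)) with hLdef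
  have hmap : (V.map (fun v => handleslideL i v) ++
      U.map (fun u => handleslideL u j))
      = L.map (fun p => handleslideL p.1 p.2) := by
    simp only [hLdef, List.map_append, List.map_map]
    rfl
  have hcond : ∀ p ∈ L, ∀ q ∈ L, q.2 ≠ p.1 := by
    intro p hp q hq
    simp only [hLdef, List.mem_append, List.mem_map] at hp hq
    rcases hp with ⟨v, hv, rfl⟩ | ⟨u, hu, rfl⟩ <;>
      rcases hq with ⟨v', hv', rfl⟩ | ⟨u', hu', rfl⟩ <;> dsimp only
    · intro e; exact hiV (e ▸ hv')
    · exact (Fin.ne_of_gt hij)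
    · intro e
      have h1 := hdegV v' hv'
      have h2 := hdegU u hu
      rw [e] at h1
      omega
    · intro e; exact hjU (e ▸ hu)
  have hprod := Stmt5Aux.prod_eq L hcond
  rw [hh, hmap, hprod]
  set S := (L.map fun p => Stmt5Aux.Eop p.1 p.2).sum with hSdef
  -- the value of S
  have hSval : ∀ y, S y = y i • d (Pi.single j 1)
      + (d y) i • (Pi.single j 1 : Fin n → ZMod 2) := by
    intro y
    have hsplit : S = (V.map fun v => Stmt5Aux.Eop i v).sum
        + (U.map fun u => Stmt5Aux.Eop u j).sum := by
      simp only [hSdef, hLdef, List.map_append, List.sum_append, List.map_map]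
      rfl
    rw [hsplit]
    have hVpart : ((V.map fun v => Stmt5Aux.Eop i v).sum) y
        = y i • d (Pi.single j 1) := by
      rw [Stmt5Aux.sumE_left_apply]
      congr 1
      funext b
      rw [Stmt5Aux.list_single_sum_apply V b, Stmt5Aux.indicator_sum V hV b, hVind b]
    have hUpart : ((U.map fun u => Stmt5Aux.Eop u j).sum) y
        = (d y) i • Pi.single j 1 := by
      rw [Stmt5Aux.sumE_right_apply]
      congr 1
      -- (d y) i = ∑ over U of y u
      have hy : y = ∑ a : Fin n, (y a) • (Pi.single a (1 : ZMod 2) : Fin n → ZMod 2) := by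
        funext b
        simp [Finset.sum_apply, Pi.single_apply, Finset.sum_ite_eq', mul_comm]
      have : d y i = ∑ a : Fin n, y a * d (Pi.single a 1) i := by
        conv_lhs => rw [hy]
        rw [map_sum]
        simp [Finset.sum_apply, smul_eq_mul]
      rw [this]
      have : ∑ a : Fin n, y a * d (Pi.single a 1) i
          = ∑ a ∈ U.toFinset, y a := by
        rw [Finset.sum_congr rfl (fun a _ => by rw [hUind a])]
        simp only [mul_ite, mul_one, mul_zero]
        have : ∀ a : Fin n, (if a ∈ U then y a else 0)
            = (if a ∈ U.toFinset then y a else 0) := by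
          intro a; simp [List.mem_toFinset]
        rw [Finset.sum_congr rfl (fun a _ => this a), Finset.sum_ite_mem,
          Finset.univ_inter]
      rw [this, List.sum_toFinset _ hU]
    rw [LinearMap.add_apply, hVpart, hUpart]

  -- S commutes with d
  have hcomm : ∀ y, S (d y) = d (S y) := by
    intro y
    rw [hSval (d y), hSval y, hdd y]
    rw [map_add, map_smul, map_smul, hdd]
    simp
  refine LinearMap.ext fun y => ?_
  simp only [LinearMap.comp_apply, LinearMap.add_apply, Module.End.one_apply, map_add]
  rw [hcomm y]
end

section
/- Let H: R × R^K → R be smooth, let g_R be a metric on R and g_F a family of fiber metrics on R^K, and set g_s = g_R + s·g_F for s ∈ (0,1]. Suppose (x,e) lies in the fiber critical set S_H (i.e. ∂H/∂e(x,e) = 0) and S_H is a 1-dimensional submanifold near (x,e) with tangent line spanned by (u,v) ∈ T_x R × T_e R^K. Writing the gradient ∇_1 H(x,e) = (α, 0), the limit as s → 0 of the gradient of H restricted to S_H with respect to the restricted metric j*g_s exists, and equals 0 if u = 0, and equals (g_R(α,u)/g_R(u,u))·(u,v) if u ≠ 0. -/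
/-- The limit lemma of Section 6.1.  Along a one-dimensional fiber critical
set with tangent line spanned by `(u, v)`, with `∇₁H = (α, 0)` there, the
gradient of `H|_{S_H}` with respect to the restricted rescaled metric
`j*g_s = g_ℝ + s·g_F` is
`(g_ℝ(α,u) / (g_ℝ(u,u) + s·g_F(v,v))) • (u, v)`.
As `s → 0⁺` this has a limit, equal to `0` if `u = 0` and to
`(g_ℝ(α,u)/g_ℝ(u,u)) • (u, v)` if `u ≠ 0`. -/
theorem stmt_10 {K : ℕ}
    (gR : ℝ →ₗ[ℝ] ℝ →ₗ[ℝ] ℝ)                     -- the metric on ℝ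
    (hgRpos : ∀ x : ℝ, x ≠ 0 → 0 < gR x x)
    (gF : (Fin K → ℝ) →ₗ[ℝ] (Fin K → ℝ) →ₗ[ℝ] ℝ)  -- the fiber metric
    (hgFpos : ∀ w : Fin K → ℝ, 0 ≤ gF w w)
    (α u : ℝ) (v : Fin K → ℝ) :
    Filter.Tendsto
      (fun s : ℝ =>
        (gR α u / (gR u u + s * gF v v)) • ((u, v) : ℝ × (Fin K → ℝ)))
      (nhdsWithin 0 (Set.Ioi 0))
      (nhds (if u = 0 then 0
             else (gR α u / gR u u) • ((u, v) : ℝ × (Fin K → ℝ)))) := by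
  by_cases hu : u = 0
  · simp only [hu, if_pos]
    have : (fun s : ℝ => (gR α 0 / (gR 0 0 + s * gF v v)) • ((0, v) : ℝ × (Fin K → ℝ)))
        = fun _ : ℝ => (0 : ℝ × (Fin K → ℝ)) := by
      funext s
      simp
    rw [this]
    exact tendsto_const_nhds
  · rw [if_neg hu]
    have hden : Filter.Tendsto (fun s : ℝ => gR u u + s * gF v v)
        (nhdsWithin 0 (Set.Ioi 0)) (nhds (gR u u)) := by
      have : Filter.Tendsto (fun s : ℝ => gR u u + s * gF v v) (nhds 0)
          (nhds (gR u u + 0 * gF v v)) := by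
        exact (tendsto_const_nhds.add ((continuous_id.mul continuous_const).tendsto 0))
      simpa using this.mono_left nhdsWithin_le_nhds
    have hne : gR u u ≠ 0 := ne_of_gt (hgRpos u hu)
    have hquot : Filter.Tendsto (fun s : ℝ => gR α u / (gR u u + s * gF v v))
        (nhdsWithin 0 (Set.Ioi 0)) (nhds (gR α u / gR u u)) :=
      Filter.Tendsto.div tendsto_const_nhds hden hne
    exact hquot.smul_const _
end
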